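/- arXiv:2104.05839 — 4 statements merged into one kernel-verified Lean document; each statement's English description precedes it below -/
import Mathlib

section
/- Let r be a natural number, set a = (r+1)/(2r+1), and let p be a real number with p ≥ 1. Then a^(log₂(1+p)) + a^(log₂(1+1/p)) ≤ 2a. -/
/-!
Write `a = 2 ^ (-s)`; the constraint `1/2 ≤ a ≤ 1` means `0 ≤ s ≤ 1`. Since
`a ^ logb 2 x = x ^ logb 2 a = x ^ (-s)`, the left-hand side equals
`(1 + p ^ s) / (1 + p) ^ s`, and the claim `1 + p ^ s ≤ 2 * ((1 + p) / 2) ^ s` is the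
midpoint concavity of `x ↦ x ^ s` at `1` and `p`.
-/

open Real

namespace Real

theorem rpow_logb_comm {b a x : ℝ} (ha : 0 < a) (hx : 0 < x) :
    a ^ logb b x = x ^ logb b a := by
  rw [rpow_def_of_pos ha, rpow_def_of_pos hx, logb, logb]
  ring_nf

theorem rpow_add_rpow_le_two_mul_half_add_rpow {s x y : ℝ} (hs0 : 0 ≤ s) (hs1 : s ≤ 1)
    (hx : 0 ≤ x) (hy : 0 ≤ y) : x ^ s + y ^ s ≤ 2 * ((x + y) / 2) ^ s := by
  have h := (concaveOn_rpow hs0 hs1).2 (Set.mem_Ici.2 hx) (Set.mem_Ici.2 hy)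
    (by norm_num : (0 : ℝ) ≤ 1 / 2) (by norm_num : (0 : ℝ) ≤ 1 / 2) (by norm_num)
  simp only [smul_eq_mul] at h
  rw [show 1 / 2 * x + 1 / 2 * y = (x + y) / 2 by ring] at h
  linarith

theorem one_add_rpow_neg_add_one_add_inv_rpow_neg_le {s p : ℝ} (hs0 : 0 ≤ s) (hs1 : s ≤ 1)
    (hp : 0 < p) : (1 + p) ^ (-s) + (1 + 1 / p) ^ (-s) ≤ 2 * 2 ^ (-s) := by
  have h1p : 0 < 1 + p := by linarith
  have hinv : (1 + 1 / p) ^ (-s) = p ^ s * (1 + p) ^ (-s) := by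
    rw [show 1 + 1 / p = (1 + p) * p⁻¹ by field_simp; ring,
      mul_rpow h1p.le (inv_nonneg.2 hp.le), inv_rpow hp.le, rpow_neg hp.le, inv_inv, mul_comm]
  have hconc := rpow_add_rpow_le_two_mul_half_add_rpow hs0 hs1 zero_le_one hp.le
  rw [one_rpow, div_rpow h1p.le zero_le_two] at hconc
  have hcancel : (1 + p) ^ (-s) * (1 + p) ^ s = 1 := by
    rw [← rpow_add h1p, neg_add_cancel, rpow_zero]
  calc (1 + p) ^ (-s) + (1 + 1 / p) ^ (-s) = (1 + p) ^ (-s) * (1 + p ^ s) := by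
        rw [hinv]; ring
    _ ≤ (1 + p) ^ (-s) * (2 * ((1 + p) ^ s / 2 ^ s)) := by gcongr
    _ = 2 * 2 ^ (-s) * ((1 + p) ^ (-s) * (1 + p) ^ s) := by
        rw [rpow_neg zero_le_two]; ring
    _ = 2 * 2 ^ (-s) := by rw [hcancel, mul_one]

theorem rpow_logb_one_add_add_rpow_logb_one_add_inv_le {a p : ℝ} (ha0 : 1 / 2 ≤ a) (ha1 : a ≤ 1)
    (hp : 0 < p) : a ^ logb 2 (1 + p) + a ^ logb 2 (1 + 1 / p) ≤ 2 * a := by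
  have ha : 0 < a := by linarith
  have hlog0 : logb 2 a ≤ 0 := logb_nonpos one_lt_two ha.le ha1
  have hlog1 : -1 ≤ logb 2 a := by
    have := logb_le_logb_of_le one_lt_two one_half_pos ha0
    rwa [one_div, logb_inv, logb_self_eq_one one_lt_two] at this
  have key := one_add_rpow_neg_add_one_add_inv_rpow_neg_le (s := -logb 2 a) (by linarith)
    (by linarith) hp
  rw [neg_neg, rpow_logb two_pos one_lt_two.ne' ha] at key
  rwa [rpow_logb_comm ha (by positivity), rpow_logb_comm ha (by positivity)]

end Real

/-- For a natural number `r`, `a = (r+1)/(2r+1)` and a real `p ≥ 1`,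
`a^(log₂(1+p)) + a^(log₂(1+1/p)) ≤ 2a`. -/
theorem stmt2 (r : ℕ) (a : ℝ) (ha : a = (r + 1 : ℝ) / (2 * r + 1)) (p : ℝ) (hp : 1 ≤ p) :
    a ^ Real.logb 2 (1 + p) + a ^ Real.logb 2 (1 + 1 / p) ≤ 2 * a := by
  have hr : (0 : ℝ) < 2 * r + 1 := by positivity
  refine rpow_logb_one_add_add_rpow_logb_one_add_inv_le ?_ ?_ (by linarith)
  · rw [ha, le_div_iff₀ hr]; linarith
  · rw [ha, div_le_one hr]; linarith
end

section
/- Let m = 2r+1 with r ≥ 1 and let R_m be the highly regular tournament on vertices v_1, …, v_m. A subset S of the vertices of R_m is acyclic if and only if there exists an index i such that S ⊆ {v_i, v_{i+1}, …, v_{i+r}}, where indices are taken modulo m. In particular, the maximal acyclic sets of R_m are exactly the sets of r+1 cyclically consecutive vertices. -/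
/-- A tournament: an irreflexive relation such that for every pair of distinct
vertices exactly one of the two directions holds. -/
def IsTournament {V : Type*} (rel : V → V → Prop) : Prop :=
  (∀ v, ¬ rel v v) ∧ ∀ u v : V, u ≠ v → (rel u v ↔ ¬ rel v u)

/-- A set `S` is acyclic (transitive) in a tournament `rel`: the relation restricted
to `S` is transitive; for a tournament this is equivalent to the restriction being a
strict linear order, i.e. to the induced subtournament having no directed cycle. -/
def AcyclicIn {V : Type*} (rel : V → V → Prop) (S : Set V) : Prop :=
  ∀ a ∈ S, ∀ b ∈ S, ∀ c ∈ S, rel a b → rel b c → rel a c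

/-- The (acyclic) chromatic number: the least `k` such that there is a coloring of the
vertices with `k` colors all of whose color classes are acyclic sets. -/
noncomputable def chromaticNumber {V : Type*} (rel : V → V → Prop) : ℕ :=
  sInf {k : ℕ | ∃ c : V → Fin k, ∀ i : Fin k, AcyclicIn rel {v | c v = i}}

/-- The dimension of the acyclic complex of a tournament: the maximum size of an
acyclic set, minus one. -/
noncomputable def acyDim {V : Type*} (rel : V → V → Prop) : ℕ :=
  sSup {n : ℕ | ∃ S : Finset V, AcyclicIn rel ↑S ∧ S.card = n} - 1

/-- The edge relation of the highly regular tournament `R_{2r+1}` on `ZMod (2r+1)`: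
`i → j` iff `j ≡ i + l (mod 2r+1)` for some `1 ≤ l ≤ r`. -/
def hrRel (r : ℕ) (i j : ZMod (2 * r + 1)) : Prop :=
  ∃ l : ℕ, 1 ≤ l ∧ l ≤ r ∧ j = i + (l : ZMod (2 * r + 1))

/-- The edge relation of the composition `R_{2q+1}(P^1, …, P^{2q+1})` of the tournaments
`relP i` over the highly regular tournament `R_{2q+1}`: inside a block use the block's
relation, between different blocks use the highly regular relation on the indices. -/
def compTournRel (q : ℕ) {V : ZMod (2 * q + 1) → Type*} (relP : ∀ i, V i → V i → Prop)
    (u v : Σ i, V i) : Prop :=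
  (∃ h : u.1 = v.1, relP v.1 (h ▸ u.2) v.2) ∨ (u.1 ≠ v.1 ∧ hrRel q u.1 v.1)


/-!
The difference `j - i` decides the edge between `i` and `j`: `i → j` iff `(j - i).val ∈ [1, r]`,
and since `(i - j).val = 2r + 1 - (j - i).val` for `i ≠ j`, this is a tournament. An acyclic set is
a finite strict linear order, so it has a source `a`, and every other vertex is then an out-neighbour
`a + l` with `1 ≤ l ≤ r`. Conversely, on `{i, …, i + r}` the edge `i + l → i + l'` holds exactly
when `l < l'`, which is transitive. Two such arcs are nested only if they coincide, so the arcs are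
the maximal acyclic sets.
-/

theorem IsTournament.asymm {V : Type*} {rel : V → V → Prop} (ht : IsTournament rel) {u v : V}
    (huv : rel u v) : ¬ rel v u := by
  rcases eq_or_ne u v with rfl | hne
  · exact absurd huv (ht.1 u)
  · exact (ht.2 u v hne).1 huv

theorem AcyclicIn.exists_source {V : Type*} {rel : V → V → Prop} {S : Set V}
    (hS : AcyclicIn rel S) (ht : IsTournament rel) (hfin : S.Finite) (hne : S.Nonempty) :
    ∃ a ∈ S, ∀ b ∈ S, b ≠ a → rel a b := by
  have : Finite S := hfin
  let R : S → S → Prop := fun x y => rel x y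
  have : IsTrans S R := ⟨fun a b c => hS a a.2 b b.2 c c.2⟩
  have : Std.Irrefl R := ⟨fun a => ht.1 a⟩
  obtain ⟨⟨a, ha⟩, -, hmin⟩ :=
    (Finite.wellFounded_of_trans_of_irrefl R).has_min Set.univ ⟨⟨_, hne.some_mem⟩, trivial⟩
  exact ⟨a, ha, fun b hb hba => (ht.2 a b (Ne.symm hba)).2 (hmin ⟨b, hb⟩ trivial)⟩

section HighlyRegular

variable {r : ℕ}

def hrArc (r : ℕ) (i : ZMod (2 * r + 1)) : Set (ZMod (2 * r + 1)) :=
  {x | ∃ l : ℕ, l ≤ r ∧ x = i + (l : ZMod (2 * r + 1))}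

theorem hrRel_iff_val_sub {i j : ZMod (2 * r + 1)} :
    hrRel r i j ↔ 1 ≤ (j - i).val ∧ (j - i).val ≤ r := by
  constructor
  · rintro ⟨l, hl1, hl2, rfl⟩
    rw [add_sub_cancel_left, ZMod.val_cast_of_lt (by omega)]
    exact ⟨hl1, hl2⟩
  · rintro ⟨h1, h2⟩
    exact ⟨(j - i).val, h1, h2, by rw [ZMod.natCast_zmod_val, add_sub_cancel]⟩

theorem isTournament_hrRel (r : ℕ) : IsTournament (hrRel r) := by
  refine ⟨fun v => by simp [hrRel_iff_val_sub], fun u v huv => ?_⟩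
  have hd : v - u ≠ 0 := sub_ne_zero.2 huv.symm
  have hneg : (u - v).val = 2 * r + 1 - (v - u).val := by
    rw [← neg_sub, ZMod.neg_val, if_neg hd]
  have hlt := (v - u).val_lt
  have hpos := (ZMod.val_pos (n := 2 * r + 1)).2 hd
  rw [hrRel_iff_val_sub, hrRel_iff_val_sub]
  omega

theorem hrRel_add_natCast_of_lt (i : ZMod (2 * r + 1)) {l l' : ℕ} (hll' : l < l') (hl' : l' ≤ r) :
    hrRel r (i + l) (i + l') :=
  ⟨l' - l, by omega, by omega, by rw [Nat.cast_sub hll'.le]; ring⟩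

theorem hrRel_add_natCast_iff (i : ZMod (2 * r + 1)) {l l' : ℕ} (hl : l ≤ r) (hl' : l' ≤ r) :
    hrRel r (i + l) (i + l') ↔ l < l' := by
  refine ⟨fun h => ?_, fun h => hrRel_add_natCast_of_lt i h hl'⟩
  rcases lt_trichotomy l l' with hlt | rfl | hgt
  · exact hlt
  · exact absurd h ((isTournament_hrRel r).1 _)
  · exact absurd (hrRel_add_natCast_of_lt i hgt hl) ((isTournament_hrRel r).asymm h)

theorem acyclicIn_hrRel_iff {S : Set (ZMod (2 * r + 1))} :
    AcyclicIn (hrRel r) S ↔ ∃ i, S ⊆ hrArc r i := by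
  constructor
  · intro hS
    rcases S.eq_empty_or_nonempty with rfl | hne
    · exact ⟨0, Set.empty_subset _⟩
    obtain ⟨a, ha, hsource⟩ := hS.exists_source (isTournament_hrRel r) S.toFinite hne
    refine ⟨a, fun x hx => ?_⟩
    rcases eq_or_ne x a with rfl | hxa
    · exact ⟨0, Nat.zero_le r, by simp⟩
    · obtain ⟨l, -, hl, hx⟩ := hsource x hx hxa
      exact ⟨l, hl, hx⟩
  · rintro ⟨i, hSi⟩ a ha b hb c hc hab hbc
    obtain ⟨la, hla, rfl⟩ := hSi ha
    obtain ⟨lb, hlb, rfl⟩ := hSi hb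
    obtain ⟨lc, hlc, rfl⟩ := hSi hc
    rw [hrRel_add_natCast_iff i hla hlb] at hab
    rw [hrRel_add_natCast_iff i hlb hlc] at hbc
    exact hrRel_add_natCast_of_lt i (hab.trans hbc) hlc

theorem acyclicIn_hrArc (i : ZMod (2 * r + 1)) : AcyclicIn (hrRel r) (hrArc r i) :=
  acyclicIn_hrRel_iff.2 ⟨i, subset_rfl⟩

theorem hrArc_subset_hrArc_iff {i j : ZMod (2 * r + 1)} : hrArc r i ⊆ hrArc r j ↔ i = j := by
  refine ⟨fun h => ?_, fun h => h ▸ subset_rfl⟩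
  obtain ⟨l, hl, rfl⟩ := h (show i ∈ hrArc r i from ⟨0, Nat.zero_le r, by simp⟩)
  -- with `i = j + l`, the last vertex `i + r` of `hrArc r i` lies in `hrArc r j` only if `l = 0`
  obtain ⟨l', hl', hend⟩ := h (show j + l + r ∈ hrArc r (j + l) from ⟨r, le_rfl, rfl⟩)
  have hcast : ((l + r : ℕ) : ZMod (2 * r + 1)) = l' := by
    push_cast
    linear_combination hend
  have hval := congrArg ZMod.val hcast
  rw [ZMod.val_cast_of_lt (by omega), ZMod.val_cast_of_lt (by omega)] at hval
  obtain rfl : l = 0 := by omega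
  simp

end HighlyRegular

theorem stmt4_general (r : ℕ) :
    (∀ S : Set (ZMod (2 * r + 1)),
      AcyclicIn (hrRel r) S ↔
        ∃ i : ZMod (2 * r + 1), ∀ x ∈ S, ∃ l : ℕ, l ≤ r ∧ x = i + (l : ZMod (2 * r + 1))) ∧
    (∀ M : Set (ZMod (2 * r + 1)),
      (AcyclicIn (hrRel r) M ∧
          ∀ S : Set (ZMod (2 * r + 1)), AcyclicIn (hrRel r) S → M ⊆ S → S = M) ↔
        ∃ i : ZMod (2 * r + 1),
          M = {x | ∃ l : ℕ, l ≤ r ∧ x = i + (l : ZMod (2 * r + 1))}) := by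
  refine ⟨fun S => acyclicIn_hrRel_iff, fun M => ⟨?_, ?_⟩⟩
  · rintro ⟨hM, hmax⟩
    obtain ⟨i, hMi⟩ := acyclicIn_hrRel_iff.1 hM
    exact ⟨i, (hmax _ (acyclicIn_hrArc i) hMi).symm⟩
  · rintro ⟨i, rfl⟩
    refine ⟨acyclicIn_hrArc i, fun S hS hiS => ?_⟩
    obtain ⟨j, hSj⟩ := acyclicIn_hrRel_iff.1 hS
    obtain rfl := hrArc_subset_hrArc_iff.1 (hiS.trans hSj)
    exact hSj.antisymm hiS

/-- Let `m = 2r+1` with `r ≥ 1` and `R_m` the highly regular tournament on `ZMod m`.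
A subset `S` of the vertices is acyclic iff it is contained in a set of `r+1`
cyclically consecutive vertices `{i, i+1, …, i+r}`; and the maximal acyclic sets
are exactly the sets of `r+1` cyclically consecutive vertices. -/
theorem stmt4 (r : ℕ) (hr : 1 ≤ r) :
    (∀ S : Set (ZMod (2 * r + 1)),
      AcyclicIn (hrRel r) S ↔
        ∃ i : ZMod (2 * r + 1), ∀ x ∈ S, ∃ l : ℕ, l ≤ r ∧ x = i + (l : ZMod (2 * r + 1))) ∧
    (∀ M : Set (ZMod (2 * r + 1)),
      (AcyclicIn (hrRel r) M ∧
          ∀ S : Set (ZMod (2 * r + 1)), AcyclicIn (hrRel r) S → M ⊆ S → S = M) ↔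
        ∃ i : ZMod (2 * r + 1),
          M = {x | ∃ l : ℕ, l ≤ r ∧ x = i + (l : ZMod (2 * r + 1))}) :=
  stmt4_general r
end

section
/- Let m = 2r+1 with r ≥ 1 and let T = R_m(P^1, …, P^m) be the composition of tournaments P^1, …, P^m over the highly regular tournament R_m. A subset S of V(T) is acyclic in T if and only if there exists an index i (taken modulo m) such that S ⊆ V(P^i) ∪ V(P^{i+1}) ∪ … ∪ V(P^{i+r}) and, for every j, the intersection S ∩ V(P^j) is acyclic in P^j. -/
/-!
A set `S` in the composition is acyclic exactly when every fibre `S ∩ V(P^j)` is acyclic in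
`P^j` and the set of blocks it meets is acyclic in `R_m`: an arc between two different blocks
is decided by the blocks alone. An acyclic set `B` of `R_m` has a source `i`, which beats every
other element of `B`, so `B ⊆ {i, i+1, …, i+r}`; conversely, on such a window `i + a → i + b`
holds iff `a < b`, which is transitive.
-/

section HighlyRegular

variable {r : ℕ}

lemma natCast_ne_zero_of_le_two_mul {l : ℕ} (h1 : 1 ≤ l) (h2 : l ≤ 2 * r) :
    (l : ZMod (2 * r + 1)) ≠ 0 := by
  rw [Ne, ZMod.natCast_eq_zero_iff]
  intro hdvd
  have := Nat.le_of_dvd (by omega) hdvd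
  omega

lemma hrRel_irrefl (i : ZMod (2 * r + 1)) : ¬ hrRel r i i := by
  rintro ⟨l, h1, h2, hl⟩
  exact natCast_ne_zero_of_le_two_mul h1 (by omega) (left_eq_add.mp hl)

lemma hrRel_asymm {i j : ZMod (2 * r + 1)} (hij : hrRel r i j) : ¬ hrRel r j i := by
  rintro ⟨l₂, h₁₂, h₂₂, rfl⟩
  obtain ⟨l₁, h₁₁, h₂₁, hl₁⟩ := hij
  have h0 : ((l₁ + l₂ : ℕ) : ZMod (2 * r + 1)) = 0 := by
    push_cast
    exact left_eq_add.mp (by rw [← add_assoc, ← hl₁])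
  exact natCast_ne_zero_of_le_two_mul (by omega) (by omega) h0

lemma hrRel_total {i j : ZMod (2 * r + 1)} (h : i ≠ j) : hrRel r i j ∨ hrRel r j i := by
  have hk : ((j - i).val : ZMod (2 * r + 1)) = j - i := ZMod.natCast_zmod_val _
  have hk0 : (j - i).val ≠ 0 := by
    rw [Ne, ZMod.val_eq_zero, sub_eq_zero]
    exact h.symm
  have hklt : (j - i).val < 2 * r + 1 := ZMod.val_lt _
  by_cases hle : (j - i).val ≤ r
  · exact Or.inl ⟨(j - i).val, by omega, hle, by rw [hk]; ring⟩
  · refine Or.inr ⟨2 * r + 1 - (j - i).val, by omega, by omega, ?_⟩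
    rw [Nat.cast_sub hklt.le, hk]
    simp

lemma hrRel_add_natCast_iff_s6 (i : ZMod (2 * r + 1)) {a b : ℕ} (ha : a ≤ r) (hb : b ≤ r) :
    hrRel r (i + a) (i + b) ↔ a < b := by
  constructor
  · rintro ⟨l, h1, h2, hl⟩
    have hz : ((b : ℕ) : ZMod (2 * r + 1)) = ((a + l : ℕ) : ZMod (2 * r + 1)) := by
      push_cast
      rw [add_assoc] at hl
      exact add_left_cancel hl
    have hv := congrArg ZMod.val hz
    rw [ZMod.val_cast_of_lt (by omega), ZMod.val_cast_of_lt (by omega)] at hv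
    omega
  · intro hlt
    exact ⟨b - a, by omega, by omega, by rw [Nat.cast_sub hlt.le]; ring⟩

lemma AcyclicIn.exists_source_s6 {B : Set (ZMod (2 * r + 1))} (hB : AcyclicIn (hrRel r) B)
    (hne : B.Nonempty) : ∃ i ∈ B, ∀ j ∈ B, j ≠ i → hrRel r i j := by
  let R : ZMod (2 * r + 1) → ZMod (2 * r + 1) → Prop := fun x y => x ∈ B ∧ y ∈ B ∧ hrRel r x y
  have htrans : IsTrans _ R :=
    ⟨fun x y z ⟨hx, hy, hxy⟩ ⟨_, hz, hyz⟩ => ⟨hx, hz, hB x hx y hy z hz hxy hyz⟩⟩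
  have hirrefl : Std.Irrefl R := ⟨fun x h => hrRel_irrefl x h.2.2⟩
  obtain ⟨i, hi, hmin⟩ := (Finite.wellFounded_of_trans_of_irrefl R).has_min B hne
  exact ⟨i, hi, fun j hj hji =>
    (hrRel_total hji.symm).resolve_right fun hji' => hmin j hj ⟨hj, hi, hji'⟩⟩

lemma acyclicIn_hrRel_iff_s6 {B : Set (ZMod (2 * r + 1))} :
    AcyclicIn (hrRel r) B ↔ ∃ i : ZMod (2 * r + 1), ∀ j ∈ B, ∃ l : ℕ, l ≤ r ∧ j = i + l := by
  constructor
  · intro hB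
    rcases B.eq_empty_or_nonempty with rfl | hne
    · exact ⟨0, by simp⟩
    obtain ⟨i, -, hi⟩ := hB.exists_source_s6 hne
    refine ⟨i, fun j hj => ?_⟩
    by_cases hji : j = i
    · exact ⟨0, Nat.zero_le r, by simp [hji]⟩
    · obtain ⟨l, -, hl, hj⟩ := hi j hj hji
      exact ⟨l, hl, hj⟩
  · rintro ⟨i, hwin⟩ x hx y hy z hz hxy hyz
    obtain ⟨a, ha, rfl⟩ := hwin x hx
    obtain ⟨b, hb, rfl⟩ := hwin y hy
    obtain ⟨c, hc, rfl⟩ := hwin z hz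
    rw [hrRel_add_natCast_iff_s6 i ha hb] at hxy
    rw [hrRel_add_natCast_iff_s6 i hb hc] at hyz
    exact (hrRel_add_natCast_iff_s6 i ha hc).mpr (hxy.trans hyz)

end HighlyRegular

section Composition

variable {r : ℕ} {V : ZMod (2 * r + 1) → Type*} {relP : ∀ i, V i → V i → Prop}

@[simp]
lemma compTournRel_mk_self {j : ZMod (2 * r + 1)} {a b : V j} :
    compTournRel r relP ⟨j, a⟩ ⟨j, b⟩ ↔ relP j a b := by
  simp [compTournRel]

lemma compTournRel_mk_iff_of_ne {x y : ZMod (2 * r + 1)} {a : V x} {b : V y} (h : x ≠ y) :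
    compTournRel r relP ⟨x, a⟩ ⟨y, b⟩ ↔ hrRel r x y := by
  simp [compTournRel, h]

lemma acyclicIn_compTournRel_iff {S : Set (Σ i, V i)} :
    AcyclicIn (compTournRel r relP) S ↔
      AcyclicIn (hrRel r) (Sigma.fst '' S) ∧
        ∀ j, AcyclicIn (relP j) {x : V j | (⟨j, x⟩ : Σ i, V i) ∈ S} := by
  constructor
  · intro hS
    refine ⟨?_, fun j a ha b hb c hc hab hbc => ?_⟩
    · rintro _ ⟨⟨x, a⟩, ha, rfl⟩ _ ⟨⟨y, b⟩, hb, rfl⟩ _ ⟨⟨z, c⟩, hc, rfl⟩ hxy hyz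
      have hxy' : x ≠ y := fun h => hrRel_irrefl y (h ▸ hxy)
      have hyz' : y ≠ z := fun h => hrRel_irrefl z (h ▸ hyz)
      have hxz' : x ≠ z := fun h => hrRel_asymm hxy (h ▸ hyz)
      have hac := hS _ ha _ hb _ hc ((compTournRel_mk_iff_of_ne hxy').mpr hxy)
        ((compTournRel_mk_iff_of_ne hyz').mpr hyz)
      exact (compTournRel_mk_iff_of_ne hxz').mp hac
    · have hac := hS _ ha _ hb _ hc (compTournRel_mk_self.mpr hab) (compTournRel_mk_self.mpr hbc)
      exact compTournRel_mk_self.mp hac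
  · rintro ⟨hidx, hfib⟩ ⟨x, a⟩ ha ⟨y, b⟩ hb ⟨z, c⟩ hc hab hbc
    by_cases hxy : x = y <;> by_cases hyz : y = z
    · subst hxy hyz
      simp only [compTournRel_mk_self] at hab hbc ⊢
      exact hfib x a ha b hb c hc hab hbc
    · subst hxy
      exact (compTournRel_mk_iff_of_ne hyz).mpr ((compTournRel_mk_iff_of_ne hyz).mp hbc)
    · subst hyz
      exact (compTournRel_mk_iff_of_ne hxy).mpr ((compTournRel_mk_iff_of_ne hxy).mp hab)
    · rw [compTournRel_mk_iff_of_ne hxy] at hab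
      rw [compTournRel_mk_iff_of_ne hyz] at hbc
      have hxz : x ≠ z := fun h => hrRel_asymm hab (h ▸ hbc)
      exact (compTournRel_mk_iff_of_ne hxz).mpr
        (hidx x ⟨_, ha, rfl⟩ y ⟨_, hb, rfl⟩ z ⟨_, hc, rfl⟩ hab hbc)

end Composition

theorem stmt6_general (r : ℕ) (V : ZMod (2 * r + 1) → Type)
    (relP : ∀ i, V i → V i → Prop)
    (S : Set (Σ i, V i)) :
    AcyclicIn (compTournRel r relP) S ↔
      ∃ i : ZMod (2 * r + 1),
        (∀ x ∈ S, ∃ l : ℕ, l ≤ r ∧ x.1 = i + (l : ZMod (2 * r + 1))) ∧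
        ∀ j : ZMod (2 * r + 1),
          AcyclicIn (relP j) {x : V j | (⟨j, x⟩ : Σ i, V i) ∈ S} := by
  rw [acyclicIn_compTournRel_iff, acyclicIn_hrRel_iff_s6]
  simp only [Set.forall_mem_image, exists_and_right]

/-- Let `m = 2r+1`, `r ≥ 1`, and let `T = R_m(P^1, …, P^m)` be the composition of the
tournaments `relP i` over the highly regular tournament `R_m`. A subset `S` of `V(T)`
is acyclic in `T` iff there is an index `i` (mod `m`) such that
`S ⊆ V(P^i) ∪ … ∪ V(P^{i+r})` and for every `j` the intersection `S ∩ V(P^j)` is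
acyclic in `P^j`. -/
theorem stmt6 (r : ℕ) (hr : 1 ≤ r) (V : ZMod (2 * r + 1) → Type)
    (relP : ∀ i, V i → V i → Prop) (htour : ∀ i, IsTournament (relP i))
    (S : Set (Σ i, V i)) :
    AcyclicIn (compTournRel r relP) S ↔
      ∃ i : ZMod (2 * r + 1),
        (∀ x ∈ S, ∃ l : ℕ, l ≤ r ∧ x.1 = i + (l : ZMod (2 * r + 1))) ∧
        ∀ j : ZMod (2 * r + 1),
          AcyclicIn (relP j) {x : V j | (⟨j, x⟩ : Σ i, V i) ∈ S} :=
  stmt6_general r V relP S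
end

section
/- Let T = R_{2r+1}(P^1, …, P^{2r+1}) be the composition of tournaments P^1, …, P^{2r+1} over the highly regular tournament R_{2r+1}, with r ≥ 1, and let χ(P^i) = k_i for each i. Suppose there are indices s and t such that k_s > k_t and k_t ≥ k_ℓ for every ℓ ∈ {1, …, 2r+1} \ {s, t}. Then χ(T) ≤ max { ⌈((2r+1)(k_s + k_t) − 1)/(2r+2)⌉ , k_s }. -/
/-!
Give every color a window `{x, x + 1, …, x + r}` of `R_{2r+1}` (an index `i` lies in the window
starting at `x` iff `(i - x).val ≤ r`). On a window `R_{2r+1}` is transitive, ordered by the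
offset from `x`, so a set that is acyclic inside every block and meets only the blocks of one
window is acyclic in `T`. Hence `χ(T)` is at most the size of any multiset of windows that
covers each index `i` at least `k_i` times.

If `k_s ≥ 2 k_t`, take `k_t` windows starting at `s - r` and `k_s - k_t` starting at `s`.
Otherwise write `2 k_t - k_s = q (r + 1) + ρ` with `ρ ≤ r` and take `q` copies of all `2r + 1`
windows, `ρ` windows at each of `-r` and `0`, and `k_s - k_t` at each of `s - r` and `s`:
these are `2 k_t - q` windows, which is at most the ceiling.
-/

open Finset Function Multiset

lemma Multiset.countP_replicate {α : Type*} (p : α → Prop) [DecidablePred p] (n : ℕ) (a : α) :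
    (replicate n a).countP p = if p a then n else 0 := by
  rw [← coe_replicate, coe_countP, List.countP_replicate]
  simp

lemma Multiset.card_subtype_toType_eq_countP {α : Type*} [DecidableEq α] (W : Multiset α)
    (p : α → Prop) [DecidablePred p] : Fintype.card {c : W // p c.1} = W.countP p := by
  conv_rhs => rw [← Multiset.map_univ_coe W, countP_map]
  rw [Fintype.card_subtype]
  rfl

lemma exists_acyclic_coloring {W : Type*} [Finite W] (rel : W → W → Prop) :
    ∃ c : W → Fin (chromaticNumber rel), ∀ i, AcyclicIn rel {v | c v = i} := by
  obtain ⟨n, ⟨e⟩⟩ := Finite.exists_equiv_fin W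
  refine Nat.sInf_mem (s := {k | ∃ c : W → Fin k, ∀ i, AcyclicIn rel {v | c v = i}})
    ⟨n, e, fun i a ha b hb c _ _ hbc => ?_⟩
  obtain rfl : b = a := e.injective (hb.trans ha.symm)
  exact hbc

lemma AcyclicIn.setOf_comp_eq {W α β : Type*} {rel : W → W → Prop} {c : W → α} {f : α → β}
    (hf : Injective f) (hc : ∀ a, AcyclicIn rel {v | c v = a}) (b : β) :
    AcyclicIn rel {v | f (c v) = b} :=
  fun x hx y hy z hz => hc (c x) x rfl y (hf (hy.trans hx.symm)) z (hf (hz.trans hx.symm))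

section Window

variable {r : ℕ}

lemma val_sub_lt_of_hrRel {x i j : ZMod (2 * r + 1)} (hi : (i - x).val ≤ r) (h : hrRel r i j) :
    (i - x).val < (j - x).val := by
  obtain ⟨l, hl, hlr, rfl⟩ := h
  have hl' : (l : ZMod (2 * r + 1)).val = l := ZMod.val_cast_of_lt (by omega)
  rw [add_sub_right_comm, ZMod.val_add_of_lt (by omega), hl']
  omega

lemma hrRel_of_val_sub_lt {x i j : ZMod (2 * r + 1)} (hj : (j - x).val ≤ r)
    (h : (i - x).val < (j - x).val) : hrRel r i j := by
  refine ⟨(j - x).val - (i - x).val, by omega, by omega, ?_⟩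
  rw [Nat.cast_sub h.le, ZMod.natCast_zmod_val, ZMod.natCast_zmod_val]
  ring

lemma val_sub_le_or_val_sub_le (x i : ZMod (2 * r + 1)) :
    (i - (x - r)).val ≤ r ∨ (i - x).val ≤ r := by
  refine or_iff_not_imp_right.mpr fun h => ?_
  have hlt : (i - x).val < 2 * r + 1 := ZMod.val_lt _
  have hcast : i - (x - r) = (((i - x).val + r : ℕ) : ZMod (2 * r + 1)) := by
    push_cast
    rw [ZMod.natCast_zmod_val]
    ring
  rw [hcast, ZMod.val_natCast, Nat.mod_eq_sub_mod (by omega), Nat.mod_eq_of_lt (by omega)]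
  omega

lemma card_filter_val_sub_le (i : ZMod (2 * r + 1)) :
    #{x : ZMod (2 * r + 1) | (i - x).val ≤ r} = r + 1 := by
  rw [← Finset.card_range (r + 1)]
  refine card_nbij' (fun x => (i - x).val) (fun d => i - d) ?_ ?_ ?_ ?_ <;>
    intro a ha <;> simp only [Finset.coe_filter, Finset.coe_range, Set.mem_Iio, Finset.mem_univ,
      true_and, Set.mem_ofPred_eq] at ha ⊢
  · omega
  · rwa [sub_sub_cancel, ZMod.val_cast_of_lt (by omega), ← Nat.lt_succ_iff]
  · rw [ZMod.natCast_zmod_val, sub_sub_cancel]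
  · rw [sub_sub_cancel, ZMod.val_cast_of_lt (by omega)]

end Window

lemma acyclicIn_compTournRel {q : ℕ} {V : ZMod (2 * q + 1) → Type*}
    (relP : ∀ i, V i → V i → Prop) (x : ZMod (2 * q + 1)) (S : Set (Σ i, V i))
    (hwin : ∀ u ∈ S, (u.1 - x).val ≤ q) (hblock : ∀ i, AcyclicIn (relP i) {v | ⟨i, v⟩ ∈ S}) :
    AcyclicIn (compTournRel q relP) S := by
  rintro ⟨a, va⟩ ha ⟨b, vb⟩ hb ⟨c, vc⟩ hc hab hbc
  dsimp only [compTournRel] at hab hbc ⊢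
  rcases hab with ⟨rfl, hab⟩ | ⟨hab_ne, hab⟩ <;> rcases hbc with ⟨rfl, hbc⟩ | ⟨hbc_ne, hbc⟩
  · exact Or.inl ⟨rfl, hblock a va ha vb hb vc hc hab hbc⟩
  · exact Or.inr ⟨hbc_ne, hbc⟩
  · exact Or.inr ⟨hab_ne, hab⟩
  · have hlt : (a - x).val < (c - x).val :=
      (val_sub_lt_of_hrRel (hwin _ ha) hab).trans (val_sub_lt_of_hrRel (hwin _ hb) hbc)
    exact Or.inr ⟨by rintro rfl; omega, hrRel_of_val_sub_lt (hwin _ hc) hlt⟩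

theorem chromaticNumber_compTournRel_le {q : ℕ} {V : ZMod (2 * q + 1) → Type*}
    [∀ i, Finite (V i)] (relP : ∀ i, V i → V i → Prop) (W : Multiset (ZMod (2 * q + 1)))
    (hcover : ∀ i, chromaticNumber (relP i) ≤ W.countP (fun x => (i - x).val ≤ q)) :
    chromaticNumber (compTournRel q relP) ≤ card W := by
  choose col hcol using fun i => exists_acyclic_coloring (relP i)
  have hemb (i) : ∃ φ : Fin (chromaticNumber (relP i)) → W,
      Injective φ ∧ ∀ j, (i - (φ j).1).val ≤ q := by
    obtain ⟨φ⟩ := Function.Embedding.nonempty_of_card_le (β := {c : W // (i - c.1).val ≤ q}) <|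
      (Fintype.card_fin _).trans_le <|
        (hcover i).trans_eq (W.card_subtype_toType_eq_countP _).symm
    exact ⟨fun j => (φ j).1, Subtype.val_injective.comp φ.injective, fun j => (φ j).2⟩
  choose φ hφinj hφwin using hemb
  let e := (Fintype.equivFin W).trans (finCongr (Multiset.card_coe W))
  refine Nat.sInf_le ⟨fun u => e (φ u.1 (col u.1 u.2)), fun c => ?_⟩
  refine acyclicIn_compTournRel relP (e.symm c).1 _ ?_ fun i => ?_
  · rintro ⟨i, v⟩ rfl
    simpa using hφwin i (col i v)
  · exact AcyclicIn.setOf_comp_eq (e.injective.comp (hφinj i)) (hcol i) c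

section Cover

variable {r : ℕ}

def windowPair (r : ℕ) (x : ZMod (2 * r + 1)) (a b : ℕ) : Multiset (ZMod (2 * r + 1)) :=
  replicate a (x - r) + replicate b x

lemma card_windowPair (x : ZMod (2 * r + 1)) (a b : ℕ) : card (windowPair r x a b) = a + b := by
  simp [windowPair]

lemma min_le_countP_windowPair (x i : ZMod (2 * r + 1)) (a b : ℕ) :
    min a b ≤ (windowPair r x a b).countP (fun y => (i - y).val ≤ r) := by
  rw [windowPair, countP_add, countP_replicate, countP_replicate]
  rcases val_sub_le_or_val_sub_le x i with h | h <;> simp [h]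

lemma countP_windowPair_self (x : ZMod (2 * r + 1)) (a b : ℕ) :
    (windowPair r x a b).countP (fun y => (x - y).val ≤ r) = a + b := by
  have hx : (x - (x - r)).val ≤ r := by
    rw [sub_sub_cancel, ZMod.val_cast_of_lt (by omega)]
  rw [windowPair, countP_add, countP_replicate, countP_replicate, if_pos hx, if_pos (by simp)]

lemma countP_nsmul_univ (q : ℕ) (i : ZMod (2 * r + 1)) :
    (q • (univ : Finset (ZMod (2 * r + 1))).val).countP (fun x => (i - x).val ≤ r) =
      q * (r + 1) := by
  rw [countP_nsmul, countP_eq_card_filter, ← Finset.filter_val, Finset.card_val,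
    card_filter_val_sub_le]

variable {k : ZMod (2 * r + 1) → ℕ} {s : ZMod (2 * r + 1)} {a : ℕ}

lemma exists_cover_of_two_mul_le (hk : ∀ i ≠ s, k i ≤ a) (h : 2 * a ≤ k s) :
    ∃ W : Multiset (ZMod (2 * r + 1)),
      card W = k s ∧ ∀ i, k i ≤ W.countP (fun x => (i - x).val ≤ r) := by
  refine ⟨windowPair r s a (k s - a), by rw [card_windowPair]; omega, fun i => ?_⟩
  rcases eq_or_ne i s with rfl | hi
  · rw [countP_windowPair_self]
    omega
  · exact (hk i hi).trans ((le_min le_rfl (by omega)).trans (min_le_countP_windowPair ..))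

lemma exists_cover_of_le_two_mul (hr : 1 ≤ r) (hk : ∀ i ≠ s, k i ≤ a) (has : a ≤ k s)
    (h : k s ≤ 2 * a) :
    ∃ W : Multiset (ZMod (2 * r + 1)), (2 * r + 2) * card W ≤ (2 * r + 1) * (k s + a) + 2 * r ∧
      ∀ i, k i ≤ W.countP (fun x => (i - x).val ≤ r) := by
  obtain ⟨d, hd⟩ := Nat.exists_eq_add_of_le has
  obtain ⟨q, ρ, hρ, hq⟩ : ∃ q ρ, ρ ≤ r ∧ a = d + (q * (r + 1) + ρ) :=
    ⟨(a - d) / (r + 1), (a - d) % (r + 1), Nat.lt_succ_iff.mp (Nat.mod_lt _ r.succ_pos),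
      by rw [Nat.div_add_mod']; omega⟩
  refine ⟨q • univ.val + windowPair r 0 ρ ρ + windowPair r s d d, ?_, fun i => ?_⟩
  · simp only [card_add, card_nsmul, Finset.card_val, Finset.card_univ, ZMod.card,
      card_windowPair, hd, hq]
    nlinarith [Nat.mul_le_mul_left d hr]
  · have h0 := min_le_countP_windowPair 0 i ρ ρ
    rw [countP_add, countP_add, countP_nsmul_univ]
    rcases eq_or_ne i s with rfl | hi
    · rw [countP_windowPair_self]
      omega
    · have hs := min_le_countP_windowPair s i d d
      have := hk i hi
      omega

end Cover

lemma natCast_le_ceil_of_mul_le {r n a b : ℕ}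
    (h : (2 * r + 2) * n ≤ (2 * r + 1) * (a + b) + 2 * r) :
    (n : ℤ) ≤ ⌈((2 * r + 1 : ℚ) * ((a : ℚ) + b) - 1) / (2 * r + 2)⌉ := by
  rw [Int.le_ceil_iff, lt_div_iff₀ (by positivity)]
  have hq : ((2 * r + 2) * n : ℚ) ≤ (2 * r + 1) * (a + b) + 2 * r := by exact_mod_cast h
  push_cast
  linarith

theorem stmt10_general (r : ℕ) (hr : 1 ≤ r) (V : ZMod (2 * r + 1) → Type)
    [∀ i, Fintype (V i)]
    (relP : ∀ i, V i → V i → Prop)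
    (k : ZMod (2 * r + 1) → ℕ) (hk : ∀ i, chromaticNumber (relP i) = k i)
    (s t : ZMod (2 * r + 1)) (hst : k t < k s)
    (hmax : ∀ l, l ≠ s → l ≠ t → k l ≤ k t) :
    (chromaticNumber (compTournRel r relP) : ℤ) ≤
      max ⌈((2 * r + 1 : ℚ) * ((k s : ℚ) + k t) - 1) / (2 * r + 2)⌉ (k s : ℤ) := by
  have hχ (W : Multiset (ZMod (2 * r + 1)))
      (hW : ∀ i, k i ≤ W.countP (fun x => (i - x).val ≤ r)) :
      chromaticNumber (compTournRel r relP) ≤ card W :=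
    chromaticNumber_compTournRel_le relP W fun i => hk i ▸ hW i
  have hkt : ∀ i ≠ s, k i ≤ k t := fun i his => by
    rcases eq_or_ne i t with rfl | hit
    exacts [le_rfl, hmax i his hit]
  rcases le_or_gt (2 * k t) (k s) with h | h
  · obtain ⟨W, hcard, hW⟩ := exists_cover_of_two_mul_le hkt h
    exact le_max_of_le_right (by exact_mod_cast hcard ▸ hχ W hW)
  · obtain ⟨W, hcard, hW⟩ := exists_cover_of_le_two_mul hr hkt hst.le h.le
    exact le_max_of_le_left <|
      (Nat.cast_le.mpr (hχ W hW)).trans (natCast_le_ceil_of_mul_le hcard)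

/-- Let `T = R_{2r+1}(P^1, …, P^{2r+1})` with `r ≥ 1` and `χ(P^i) = k_i`. If there are
indices `s, t` with `k_s > k_t` and `k_t ≥ k_ℓ` for all other `ℓ`, then
`χ(T) ≤ max { ⌈((2r+1)(k_s + k_t) − 1)/(2r+2)⌉ , k_s }`. -/
theorem stmt10 (r : ℕ) (hr : 1 ≤ r) (V : ZMod (2 * r + 1) → Type)
    [∀ i, Fintype (V i)] [∀ i, Nonempty (V i)]
    (relP : ∀ i, V i → V i → Prop) (htour : ∀ i, IsTournament (relP i))
    (k : ZMod (2 * r + 1) → ℕ) (hk : ∀ i, chromaticNumber (relP i) = k i)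
    (s t : ZMod (2 * r + 1)) (hst : k t < k s)
    (hmax : ∀ l, l ≠ s → l ≠ t → k l ≤ k t) :
    (chromaticNumber (compTournRel r relP) : ℤ) ≤
      max ⌈((2 * r + 1 : ℚ) * ((k s : ℚ) + k t) - 1) / (2 * r + 2)⌉ (k s : ℤ) :=
  stmt10_general r hr V relP k hk s t hst hmax
end
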